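/- Let d ≥ 1, τ > 0, R > 0, let ν be a probability measure on ℝ^d supported in [−R,R]^d, and let S ⊆ [−R,R]^d be a nonempty finite set. Then the function x ↦ max_{y∈S} ( log φ_{τ²}(x − y) − log p_{ν,τ}(x) ) is (2R√d/τ²)-Lipschitz on ℝ^d. -/
import Mathlib


open MeasureTheory
open scoped RealInnerProductSpace

/-- Density of `N(0, τ² I_d)` on `ℝ^d`. -/
noncomputable def gphi (d : ℕ) (τ : ℝ) (z : EuclideanSpace ℝ (Fin d)) : ℝ :=
  (2 * Real.pi * τ ^ 2) ^ (-(d : ℝ) / 2) * Real.exp (-‖z‖ ^ 2 / (2 * τ ^ 2))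

/-- Density of `ν * N(0, τ² I_d)`. -/
noncomputable def pdens (d : ℕ) (τ : ℝ) (ν : Measure (EuclideanSpace ℝ (Fin d)))
    (x : EuclideanSpace ℝ (Fin d)) : ℝ :=
  ∫ y, gphi d τ (x - y) ∂ν

section Aux

variable {d : ℕ} {τ R : ℝ}

lemma gphi_pos (hτ : 0 < τ) (z : EuclideanSpace ℝ (Fin d)) : 0 < gphi d τ z := by
  unfold gphi
  have h2 : (0:ℝ) < 2 * Real.pi * τ ^ 2 := by positivity
  positivity

lemma gphi_le_const (hτ : 0 < τ) (z : EuclideanSpace ℝ (Fin d)) :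
    gphi d τ z ≤ (2 * Real.pi * τ ^ 2) ^ (-(d : ℝ) / 2) := by
  unfold gphi
  have h2 : (0:ℝ) < 2 * Real.pi * τ ^ 2 := by positivity
  have h1 : Real.exp (-‖z‖ ^ 2 / (2 * τ ^ 2)) ≤ 1 := by
    apply Real.exp_le_one_iff.mpr
    have : (0:ℝ) < 2 * τ ^ 2 := by positivity
    apply div_nonpos_of_nonpos_of_nonneg _ this.le
    simp [sq_nonneg]
  calc (2 * Real.pi * τ ^ 2) ^ (-(d : ℝ) / 2) * Real.exp (-‖z‖ ^ 2 / (2 * τ ^ 2))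
      ≤ (2 * Real.pi * τ ^ 2) ^ (-(d : ℝ) / 2) * 1 := by
        apply mul_le_mul_of_nonneg_left h1 (by positivity)
    _ = _ := mul_one _

lemma norm_le_of_abs_le (hR : 0 ≤ R) (y : EuclideanSpace ℝ (Fin d))
    (h : ∀ i, |y i| ≤ R) : ‖y‖ ≤ R * Real.sqrt d := by
  rw [EuclideanSpace.norm_eq]
  have hsum : ∑ i, ‖y i‖ ^ 2 ≤ (d : ℝ) * R ^ 2 := by
    calc ∑ i, ‖y i‖ ^ 2 ≤ ∑ _i : Fin d, R ^ 2 := by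
          apply Finset.sum_le_sum
          intro i _
          have hi := h i
          rw [Real.norm_eq_abs]
          nlinarith [abs_nonneg (y i)]
      _ = (d : ℝ) * R ^ 2 := by simp [Finset.sum_const]
  calc Real.sqrt (∑ i, ‖y i‖ ^ 2) ≤ Real.sqrt ((d : ℝ) * R ^ 2) := Real.sqrt_le_sqrt hsum
    _ = R * Real.sqrt d := by
        rw [Real.sqrt_mul (by positivity), Real.sqrt_sq hR]; ring

lemma gphi_ratio (hτ : 0 < τ) (x x' y : EuclideanSpace ℝ (Fin d)) :
    gphi d τ (x - y) = gphi d τ (x' - y) *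
      Real.exp ((‖x'‖ ^ 2 - ‖x‖ ^ 2) / (2 * τ ^ 2) - ⟪x' - x, y⟫ / τ ^ 2) := by
  have hexp : Real.exp (-‖x - y‖ ^ 2 / (2 * τ ^ 2)) =
      Real.exp (-‖x' - y‖ ^ 2 / (2 * τ ^ 2)) *
      Real.exp ((‖x'‖ ^ 2 - ‖x‖ ^ 2) / (2 * τ ^ 2) - ⟪x' - x, y⟫ / τ ^ 2) := by
    rw [← Real.exp_add]
    congr 1
    have h1 : ‖x - y‖ ^ 2 = ‖x‖ ^ 2 - 2 * ⟪x, y⟫ + ‖y‖ ^ 2 := norm_sub_sq_real x y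
    have h2 : ‖x' - y‖ ^ 2 = ‖x'‖ ^ 2 - 2 * ⟪x', y⟫ + ‖y‖ ^ 2 := norm_sub_sq_real x' y
    have h3 : ⟪x' - x, y⟫ = ⟪x', y⟫ - ⟪x, y⟫ := inner_sub_left _ _ _
    have hτ2 : (τ : ℝ) ^ 2 ≠ 0 := by positivity
    rw [h1, h2, h3]
    field_simp
    ring
  unfold gphi
  rw [hexp]
  ring

lemma gphi_integrable (hτ : 0 < τ) (ν : Measure (EuclideanSpace ℝ (Fin d)))
    [IsProbabilityMeasure ν] (x : EuclideanSpace ℝ (Fin d)) :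
    Integrable (fun y => gphi d τ (x - y)) ν := by
  have hc : Continuous fun y : EuclideanSpace ℝ (Fin d) => gphi d τ (x - y) := by
    unfold gphi; fun_prop
  apply (integrable_const ((2 * Real.pi * τ ^ 2) ^ (-(d : ℝ) / 2))).mono'
    hc.aestronglyMeasurable
  filter_upwards with y
  rw [Real.norm_eq_abs, abs_of_pos (gphi_pos hτ _)]
  exact gphi_le_const hτ _

lemma pdens_pos (hτ : 0 < τ) (hR : 0 < R) (ν : Measure (EuclideanSpace ℝ (Fin d)))
    [IsProbabilityMeasure ν] (hsupp : ∀ᵐ y ∂ν, ∀ i, |y i| ≤ R)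
    (x : EuclideanSpace ℝ (Fin d)) : 0 < pdens d τ ν x := by
  set C := (2 * Real.pi * τ ^ 2) ^ (-(d : ℝ) / 2) with hC
  have hCpos : 0 < C := by
    have h2 : (0:ℝ) < 2 * Real.pi * τ ^ 2 := by positivity
    positivity
  set c := C * Real.exp (-(‖x‖ + R * Real.sqrt d) ^ 2 / (2 * τ ^ 2)) with hc
  have hcpos : 0 < c := by positivity
  have hτ2 : (0:ℝ) < 2 * τ ^ 2 := by positivity
  have hb : ∀ᵐ y ∂ν, c ≤ gphi d τ (x - y) := by
    filter_upwards [hsupp] with y hy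
    have hny : ‖y‖ ≤ R * Real.sqrt d := norm_le_of_abs_le hR.le y hy
    have hnxy : ‖x - y‖ ≤ ‖x‖ + R * Real.sqrt d :=
      le_trans (norm_sub_le x y) (by linarith)
    have hsq : ‖x - y‖ ^ 2 ≤ (‖x‖ + R * Real.sqrt d) ^ 2 := by
      nlinarith [norm_nonneg (x - y)]
    unfold gphi
    rw [hc, hC]
    apply mul_le_mul_of_nonneg_left _ hCpos.le
    apply Real.exp_le_exp.mpr
    rw [div_le_div_iff₀ hτ2 hτ2]
    nlinarith
  have hint := gphi_integrable hτ ν x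
  have h1 : ∫ (_y : EuclideanSpace ℝ (Fin d)), c ∂ν ≤ pdens d τ ν x := by
    unfold pdens
    exact integral_mono_ae (integrable_const c) hint hb
  rw [integral_const] at h1
  simp at h1
  linarith

lemma log_pdens_sub (hτ : 0 < τ) (hR : 0 < R) (ν : Measure (EuclideanSpace ℝ (Fin d)))
    [IsProbabilityMeasure ν] (hsupp : ∀ᵐ y ∂ν, ∀ i, |y i| ≤ R)
    (x x' : EuclideanSpace ℝ (Fin d)) :
    Real.log (pdens d τ ν x) - Real.log (pdens d τ ν x')
      ≤ (‖x'‖ ^ 2 - ‖x‖ ^ 2) / (2 * τ ^ 2) + ‖x' - x‖ * (R * Real.sqrt d) / τ ^ 2 := by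
  set A := (‖x'‖ ^ 2 - ‖x‖ ^ 2) / (2 * τ ^ 2) with hA
  set D := ‖x' - x‖ * (R * Real.sqrt d) / τ ^ 2 with hD
  have hτ2 : (0:ℝ) < τ ^ 2 := by positivity
  have hple : pdens d τ ν x ≤ Real.exp (A + D) * pdens d τ ν x' := by
    unfold pdens
    rw [← integral_const_mul]
    apply integral_mono_ae (gphi_integrable hτ ν x)
      ((gphi_integrable hτ ν x').const_mul _)
    filter_upwards [hsupp] with y hy
    rw [gphi_ratio hτ x x' y, mul_comm]
    apply mul_le_mul_of_nonneg_right _ (gphi_pos hτ _).le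
    apply Real.exp_le_exp.mpr
    have h1 : |⟪x' - x, y⟫| ≤ ‖x' - x‖ * (R * Real.sqrt d) :=
      le_trans (abs_real_inner_le_norm _ _)
        (mul_le_mul_of_nonneg_left (norm_le_of_abs_le hR.le y hy) (norm_nonneg _))
    have h2 := abs_le.mp h1
    have h3 : -⟪x' - x, y⟫ / τ ^ 2 ≤ D := by
      rw [hD, div_le_div_iff₀ hτ2 hτ2]
      nlinarith [h2.1]
    have : A - ⟪x' - x, y⟫ / τ ^ 2 = A + -⟪x' - x, y⟫ / τ ^ 2 := by ring
    rw [this]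
    linarith
  have hpx := pdens_pos hτ hR ν hsupp x
  have hpx' := pdens_pos hτ hR ν hsupp x'
  have hlog : Real.log (pdens d τ ν x) ≤ Real.log (Real.exp (A + D) * pdens d τ ν x') :=
    Real.log_le_log hpx hple
  rw [Real.log_mul (Real.exp_ne_zero _) hpx'.ne', Real.log_exp] at hlog
  linarith

end Aux

/-- The maximum over a nonempty finite set `S ⊆ [-R,R]^d` of the log-likelihood ratios
`x ↦ log φ_{τ²}(x−y) − log p_{ν,τ}(x)` is `(2R√d/τ²)`-Lipschitz. -/
theorem stmt17 (d : ℕ) (hd : 1 ≤ d) (τ R : ℝ) (hτ : 0 < τ) (hR : 0 < R)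
    (ν : Measure (EuclideanSpace ℝ (Fin d))) [IsProbabilityMeasure ν]
    (hsupp : ∀ᵐ y ∂ν, ∀ i, |y i| ≤ R)
    (S : Finset (EuclideanSpace ℝ (Fin d))) (hS : S.Nonempty)
    (hSsupp : ∀ y ∈ S, ∀ i, |y i| ≤ R) :
    LipschitzWith (Real.toNNReal (2 * R * Real.sqrt d / τ ^ 2))
      (fun x => S.sup' hS fun y => Real.log (gphi d τ (x - y)) - Real.log (pdens d τ ν x)) := by
  have hτ2 : (0:ℝ) < τ ^ 2 := by positivity
  have hK0 : (0:ℝ) ≤ 2 * R * Real.sqrt d / τ ^ 2 := by positivity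
  rw [lipschitzWith_iff_dist_le_mul]
  intro x x'
  rw [Real.coe_toNNReal _ hK0, Real.dist_eq]
  set K := 2 * R * Real.sqrt d / τ ^ 2 with hKdef
  have key : ∀ y ∈ S,
      |(Real.log (gphi d τ (x - y)) - Real.log (pdens d τ ν x)) -
        (Real.log (gphi d τ (x' - y)) - Real.log (pdens d τ ν x'))| ≤ K * dist x x' := by
    intro y hy
    set A := (‖x'‖ ^ 2 - ‖x‖ ^ 2) / (2 * τ ^ 2) with hA
    set D := ‖x' - x‖ * (R * Real.sqrt d) / τ ^ 2 with hD
    have hg : Real.log (gphi d τ (x - y)) - Real.log (gphi d τ (x' - y))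
        = A - ⟪x' - x, y⟫ / τ ^ 2 := by
      rw [gphi_ratio hτ x x' y,
        Real.log_mul (gphi_pos hτ _).ne' (Real.exp_ne_zero _), Real.log_exp]
      ring
    have hp1 := log_pdens_sub hτ hR ν hsupp x x'
    have hp2 := log_pdens_sub hτ hR ν hsupp x' x
    have hrev : ‖x - x'‖ = ‖x' - x‖ := norm_sub_rev x x'
    rw [hrev] at hp2
    have hA2 : (‖x‖ ^ 2 - ‖x'‖ ^ 2) / (2 * τ ^ 2) = -A := by rw [hA]; ring
    rw [hA2] at hp2
    have hi : |⟪x' - x, y⟫| ≤ ‖x' - x‖ * (R * Real.sqrt d) :=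
      le_trans (abs_real_inner_le_norm _ _)
        (mul_le_mul_of_nonneg_left (norm_le_of_abs_le hR.le y (hSsupp y hy)) (norm_nonneg _))
    have hi2 := abs_le.mp hi
    have hi3 : ⟪x' - x, y⟫ / τ ^ 2 ≤ D := by
      rw [hD, div_le_div_iff₀ hτ2 hτ2]; nlinarith [hi2.2]
    have hi4 : -D ≤ ⟪x' - x, y⟫ / τ ^ 2 := by
      rw [hD, ← neg_div, div_le_div_iff₀ hτ2 hτ2]; nlinarith [hi2.1]
    have hKd : K * dist x x' = 2 * D := by
      rw [hKdef, hD, dist_eq_norm, hrev]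
      field_simp
    rw [hKd]
    have heq : (Real.log (gphi d τ (x - y)) - Real.log (pdens d τ ν x)) -
        (Real.log (gphi d τ (x' - y)) - Real.log (pdens d τ ν x'))
        = (A - ⟪x' - x, y⟫ / τ ^ 2) -
          (Real.log (pdens d τ ν x) - Real.log (pdens d τ ν x')) := by
      rw [← hg]; ring
    rw [heq, abs_le]
    constructor <;> linarith
  rw [abs_sub_le_iff]
  constructor
  · rw [sub_le_iff_le_add]
    apply Finset.sup'_le
    intro y hy
    have h1 := (abs_le.mp (key y hy)).2
    have h2 : (Real.log (gphi d τ (x' - y)) - Real.log (pdens d τ ν x')) ≤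
        S.sup' hS fun y => Real.log (gphi d τ (x' - y)) - Real.log (pdens d τ ν x') :=
      Finset.le_sup' (fun z => Real.log (gphi d τ (x' - z)) - Real.log (pdens d τ ν x')) hy
    linarith
  · rw [sub_le_iff_le_add]
    apply Finset.sup'_le
    intro y hy
    have h1 := (abs_le.mp (key y hy)).1
    have h2 : (Real.log (gphi d τ (x - y)) - Real.log (pdens d τ ν x)) ≤
        S.sup' hS fun y => Real.log (gphi d τ (x - y)) - Real.log (pdens d τ ν x) :=
      Finset.le_sup' (fun z => Real.log (gphi d τ (x - z)) - Real.log (pdens d τ ν x)) hy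
    linarith
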